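/- Let $1<p<\infty$, let $\Omega\subset\mathbb{R}^n$ be bounded open, and let $u$ be a renormalized-type solution in the sense that for every integer $k>0$, $T_k(u)=\max\{-k,\min\{k,u\}\}\in W^{1,p}_0(\Omega)$ and $-\mathrm{div}\,\mathcal{A}(x,\nabla T_k(u))=\mu_k$ with $\mu_k=\chi_{\{|u|<k\}}\mu_0+\lambda_k^+-\lambda_k^-$, where $\lambda_k^\pm$ are nonnegative measures concentrated on $\{u=\pm k\}$ converging narrowly to $\mu_s^\pm$, and $|u|<\infty$ $\mu_0$-a.e. Then $|\mu_k|\to|\mu|$ narrowly, where $\mu=\mu_0+\mu_s^+-\mu_s^-$ with $\mu_s^+\perp\mu_s^-$ and $\mu_s^\pm\perp\mu_0$. -/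

import Mathlib

open MeasureTheory Filter

/-!
Since `λ_k^±` live on the level sets `{u = ±k}`, which the truncation `{|u| < k}` misses, the
three pieces of `μ_k` are mutually singular, so `|μ_k| = |μ₀|⌊{|u| < k} + λ_k^+ + λ_k^-`;
likewise `|μ| = |μ₀| + μ_s^+ + μ_s^-`. The first summand converges to `|μ₀|` by monotone
convergence of the sets `{|u| < k}` to the whole space, the other two converge narrowly by
hypothesis.
-/

namespace MeasureTheory

variable {X : Type*} [MeasurableSpace X]

namespace SignedMeasure

theorem totalVariation_eq_of_eq_sub {s : SignedMeasure X} {ν₁ ν₂ : Measure X}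
    [IsFiniteMeasure ν₁] [IsFiniteMeasure ν₂] (hν : ν₁ ⟂ₘ ν₂)
    (hs : s = ν₁.toSignedMeasure - ν₂.toSignedMeasure) :
    s.totalVariation = ν₁ + ν₂ := by
  rw [totalVariation, toJordanDecomposition_eq (j := ⟨ν₁, ν₂, hν⟩) hs]

theorem totalVariation_restrict (s : SignedMeasure X) {S : Set X} (hS : MeasurableSet S) :
    SignedMeasure.totalVariation (s.restrict S) = s.totalVariation.restrict S := by
  set j := s.toJordanDecomposition
  rw [show s.totalVariation = j.posPart + j.negPart from rfl, Measure.restrict_add]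
  refine totalVariation_eq_of_eq_sub
    (j.mutuallySingular.mono Measure.restrict_le_self Measure.restrict_le_self) ?_
  rw [← VectorMeasure.restrict_toSignedMeasure hS, ← VectorMeasure.restrict_toSignedMeasure hS,
    ← VectorMeasure.restrict_sub,
    ← JordanDecomposition.toSignedMeasure, toSignedMeasure_toJordanDecomposition]

theorem totalVariation_add_sub_of_mutuallySingular (s : SignedMeasure X) {ν₁ ν₂ : Measure X}
    [IsFiniteMeasure ν₁] [IsFiniteMeasure ν₂] (h₁₂ : ν₁ ⟂ₘ ν₂) (h₁ : ν₁ ⟂ₘ s.totalVariation)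
    (h₂ : ν₂ ⟂ₘ s.totalVariation) :
    (s + ν₁.toSignedMeasure - ν₂.toSignedMeasure).totalVariation =
      s.totalVariation + ν₁ + ν₂ := by
  set j := s.toJordanDecomposition
  obtain ⟨h₁p, h₁m⟩ := Measure.MutuallySingular.add_right_iff.mp h₁
  obtain ⟨h₂p, h₂m⟩ := Measure.MutuallySingular.add_right_iff.mp h₂
  have hsing : (j.posPart + ν₁) ⟂ₘ (j.negPart + ν₂) :=
    (j.mutuallySingular.add_right h₂p.symm).add_left (h₁m.add_right h₁₂)
  rw [totalVariation_eq_of_eq_sub hsing ?_]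
  · rw [totalVariation]
    abel
  · conv_lhs => rw [← toSignedMeasure_toJordanDecomposition s]
    rw [Measure.toSignedMeasure_add, Measure.toSignedMeasure_add,
      JordanDecomposition.toSignedMeasure]
    abel

end SignedMeasure

section LevelSets

variable {u : X → ℝ}

theorem Measure.mutuallySingular_of_levelSet {ν₁ ν₂ : Measure X} {a b : ℝ} (hab : a ≠ b)
    (h₁ : ν₁ {x | u x ≠ a} = 0) (h₂ : ν₂ {x | u x ≠ b} = 0) : ν₁ ⟂ₘ ν₂ :=
  Measure.MutuallySingular.mk h₁ h₂ fun x _ => by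
    by_cases hx : u x = a
    · exact Or.inr fun hb => hab (hx ▸ hb)
    · exact Or.inl hx

theorem Measure.mutuallySingular_restrict_abs_lt (hu : Measurable u) (μ : Measure X)
    {ν : Measure X} {c r : ℝ} (hr : r ≤ |c|) (hν : ν {x | u x ≠ c} = 0) :
    ν ⟂ₘ μ.restrict {x | |u x| < r} := by
  refine Measure.MutuallySingular.mk hν (t := {x | u x = c}) ?_ fun x _ => em' (u x = c)
  rw [Measure.restrict_apply' (measurableSet_lt hu.abs measurable_const)]
  convert measure_empty (μ := μ)
  ext x
  simp only [Set.mem_inter_iff, Set.mem_empty_iff_false, iff_false, not_and]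
  rintro rfl
  simpa using hr

theorem tendsto_setIntegral_abs_lt (hu : Measurable u) (μ : Measure X) {f : X → ℝ}
    (hf : Integrable f μ) :
    Tendsto (fun k : ℕ => ∫ x in {x | |u x| < (k : ℝ) + 1}, f x ∂μ) atTop (nhds (∫ x, f x ∂μ)) := by
  have hunion : ⋃ k : ℕ, {x | |u x| < (k : ℝ) + 1} = Set.univ :=
    Set.eq_univ_of_forall fun x => Set.mem_iUnion.mpr
      ⟨⌈|u x|⌉₊, (Nat.le_ceil |u x|).trans_lt (lt_add_one _)⟩
  have hmono : Monotone fun k : ℕ => {x | |u x| < (k : ℝ) + 1} :=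
    fun k l hkl x (hx : |u x| < k + 1) => show |u x| < (l : ℝ) + 1 from hx.trans_le (by gcongr)
  simpa only [hunion, Measure.restrict_univ] using
    tendsto_setIntegral_of_monotone (fun _ => measurableSet_lt hu.abs measurable_const) hmono
      (hunion ▸ hf.integrableOn)

end LevelSets

end MeasureTheory

open MeasureTheory

/-- For a renormalized-type solution, the total variations `|μ_k|` of the truncated data
`μ_k = χ_{{|u|<k}} μ₀ + λ_k^+ - λ_k^-` converge narrowly to `|μ|`, where
`μ = μ₀ + μ_s^+ - μ_s^-` with the three pieces mutually singular. -/
theorem stmt19 {X : Type*} [MeasurableSpace X] [TopologicalSpace X]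
    [OpensMeasurableSpace X]
    (u : X → ℝ) (hu : Measurable u)
    (μ₀ : SignedMeasure X) (μsp μsm : Measure X)
    [IsFiniteMeasure μsp] [IsFiniteMeasure μsm]
    (lamP lamM : ℕ → Measure X)
    [∀ k, IsFiniteMeasure (lamP k)] [∀ k, IsFiniteMeasure (lamM k)]
    (hconcP : ∀ k : ℕ, lamP (k + 1) {x | u x ≠ ((k : ℝ) + 1)} = 0)
    (hconcM : ∀ k : ℕ, lamM (k + 1) {x | u x ≠ -((k : ℝ) + 1)} = 0)
    (hnarrowP : ∀ f : BoundedContinuousFunction X ℝ,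
      Tendsto (fun k => ∫ x, f x ∂(lamP (k + 1))) atTop (nhds (∫ x, f x ∂μsp)))
    (hnarrowM : ∀ f : BoundedContinuousFunction X ℝ,
      Tendsto (fun k => ∫ x, f x ∂(lamM (k + 1))) atTop (nhds (∫ x, f x ∂μsm)))
    (hsing1 : μsp.MutuallySingular μsm)
    (hsing2 : μsp.MutuallySingular μ₀.totalVariation)
    (hsing3 : μsm.MutuallySingular μ₀.totalVariation) :
    ∀ f : BoundedContinuousFunction X ℝ,
      Tendsto (fun k : ℕ => ∫ x, f x ∂(SignedMeasure.totalVariation (μ₀.restrict {x | |u x| < ((k : ℝ) + 1)} +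
          (lamP (k + 1)).toSignedMeasure - (lamM (k + 1)).toSignedMeasure)))
        atTop
        (nhds (∫ x, f x ∂(SignedMeasure.totalVariation (μ₀ + μsp.toSignedMeasure -
          μsm.toSignedMeasure)))) := by
  intro f
  have hS : ∀ k : ℕ, MeasurableSet {x | |u x| < (k : ℝ) + 1} := fun _ =>
    measurableSet_lt hu.abs measurable_const
  have hμk : ∀ k : ℕ, SignedMeasure.totalVariation (μ₀.restrict {x | |u x| < (k : ℝ) + 1} +
      (lamP (k + 1)).toSignedMeasure - (lamM (k + 1)).toSignedMeasure) =
      μ₀.totalVariation.restrict {x | |u x| < (k : ℝ) + 1} + lamP (k + 1) + lamM (k + 1) := by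
    intro k
    have hk : (0 : ℝ) < k + 1 := k.cast_add_one_pos
    have hP := Measure.mutuallySingular_restrict_abs_lt hu μ₀.totalVariation (le_abs_self _)
      (hconcP k)
    have hM := Measure.mutuallySingular_restrict_abs_lt hu μ₀.totalVariation (r := k + 1)
      (by rw [abs_neg]; exact le_abs_self _) (hconcM k)
    rw [← SignedMeasure.totalVariation_restrict _ (hS k)] at hP hM
    rw [SignedMeasure.totalVariation_add_sub_of_mutuallySingular _
      (Measure.mutuallySingular_of_levelSet (by linarith) (hconcP k) (hconcM k)) hP hM,
      SignedMeasure.totalVariation_restrict _ (hS k)]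
  simp only [hμk, SignedMeasure.totalVariation_add_sub_of_mutuallySingular _ hsing1 hsing2 hsing3,
    integral_add_measure (f.integrable _) (f.integrable _)]
  exact ((tendsto_setIntegral_abs_lt hu _ (f.integrable _)).add (hnarrowP f)).add (hnarrowM f)
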